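/- Fix T > 0, jump times 0 < t₁ < ⋯ < t_n ≤ T, and two measurable paths X, X̃ : [0,T] → ℝ^K. Let ι be an index type and θ_i : ℝ^K → ℝ (i ∈ ι) measurable with sup_{i} sup_x |θ_i(x)| ≤ θ̄ < ∞, weights w : ι → ℝ with w̲ := inf_i w_i > 0, B̄ > 0 and B̄_w := B̄/w̲. Then sup_{g ∈ ℒ(B̄)} | L_T(g; X̃) − L_T(g; X) | ≤ B̄_w·(1 + e^{B̄_w θ̄}) · sup_{i∈ι} [ ∑_{j=1}^n |θ_i(X̃(t_j)) − θ_i(X(t_j))| + ∫_0^T |θ_i(X̃(t)) − θ_i(X(t))| dt ]. -/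

import Mathlib

/-! The jump terms of `L_T(g; X̃) - L_T(g; X)` are bounded by the path discrepancy of `g`, and
the compensator terms by `e^C` times it, since `exp` is `e^C`-Lipschitz on `[-C, C]` and
`|g| ≤ C := B̄_w θ̄`. The path discrepancy is subadditive along the series `g = ∑ bᵢ θᵢ`, so it is
at most `∑ |bᵢ| S ≤ B̄_w S` by the weighted `ℓ¹` constraint. -/

open MeasureTheory

/-- The sample log-likelihood `L_T(g; Y) = ∑ⱼ g(Y(tⱼ)) - ∫₀ᵀ exp(g(Y(t))) dt`
computed from the path `Y`. -/
noncomputable def sampleLogLik (K : ℕ) (T : ℝ) (n : ℕ) (t : Fin n → ℝ)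
    (Y : ℝ → (Fin K → ℝ)) (g : (Fin K → ℝ) → ℝ) : ℝ :=
  (∑ i, g (Y (t i))) - ∫ s in (0 : ℝ)..T, Real.exp (g (Y s))

open Real

lemma Real.abs_exp_sub_exp_le {u v C : ℝ} (hu : |u| ≤ C) (hv : |v| ≤ C) :
    |exp u - exp v| ≤ exp C * |u - v| := by
  simpa only [Real.norm_eq_abs] using (convex_Icc (-C) C).norm_image_sub_le_of_norm_deriv_le
    (fun _ _ => differentiableAt_exp)
    (fun x hx => by simpa only [Real.deriv_exp, Real.norm_eq_abs, abs_exp] using exp_le_exp.2 hx.2)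
    (abs_le.1 hv) (abs_le.1 hu)

lemma intervalIntegrable_of_abs_le {f : ℝ → ℝ} (hf : Measurable f) {C : ℝ}
    (hC : ∀ x, |f x| ≤ C) (a b : ℝ) : IntervalIntegrable f volume a b :=
  intervalIntegrable_const.mono_fun' hf.aestronglyMeasurable (Filter.Eventually.of_forall hC)

noncomputable def pathDiscrepancy {E : Type*} (T : ℝ) {n : ℕ} (t : Fin n → ℝ) (X Xt : ℝ → E)
    (f : E → ℝ) : ℝ :=
  (∑ j, |f (Xt (t j)) - f (X (t j))|) + ∫ s in (0 : ℝ)..T, |f (Xt s) - f (X s)|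

lemma pathDiscrepancy_nonneg {E : Type*} {T : ℝ} (hT : 0 ≤ T) {n : ℕ} (t : Fin n → ℝ)
    (X Xt : ℝ → E) (f : E → ℝ) : 0 ≤ pathDiscrepancy T t X Xt f :=
  add_nonneg (Finset.sum_nonneg fun _ _ => abs_nonneg _)
    (intervalIntegral.integral_nonneg hT fun _ _ => abs_nonneg _)

lemma abs_sampleLogLik_sub_le {K : ℕ} {T : ℝ} (hT : 0 ≤ T) {n : ℕ} (t : Fin n → ℝ)
    {X Xt : ℝ → (Fin K → ℝ)} (hX : Measurable X) (hXt : Measurable Xt)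
    {g : (Fin K → ℝ) → ℝ} (hg : Measurable g) {C : ℝ} (hgC : ∀ x, |g x| ≤ C) :
    |sampleLogLik K T n t Xt g - sampleLogLik K T n t X g| ≤
      (1 + exp C) * pathDiscrepancy T t X Xt g := by
  set A := ∑ j, |g (Xt (t j)) - g (X (t j))|
  set I := ∫ s in (0 : ℝ)..T, |g (Xt s) - g (X s)|
  have hA : |(∑ j, g (Xt (t j))) - ∑ j, g (X (t j))| ≤ A := by
    rw [← Finset.sum_sub_distrib]
    exact Finset.abs_sum_le_sum_abs _ _
  have hexp : ∀ Y : ℝ → (Fin K → ℝ), Measurable Y →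
      IntervalIntegrable (fun s => exp (g (Y s))) volume 0 T := fun Y hY =>
    intervalIntegrable_of_abs_le (measurable_exp.comp (hg.comp hY))
      (fun s => (abs_exp _).trans_le (exp_le_exp.2 ((le_abs_self _).trans (hgC _)))) _ _
  have hdiff : IntervalIntegrable (fun s => |g (Xt s) - g (X s)|) volume 0 T :=
    intervalIntegrable_of_abs_le ((hg.comp hXt).sub (hg.comp hX)).abs (C := C + C)
      (fun s => (abs_abs _).trans_le ((abs_sub _ _).trans (add_le_add (hgC _) (hgC _)))) _ _
  have hI : |(∫ s in (0 : ℝ)..T, exp (g (Xt s))) - ∫ s in (0 : ℝ)..T, exp (g (X s))| ≤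
      exp C * I := by
    rw [← intervalIntegral.integral_sub (hexp Xt hXt) (hexp X hX),
      ← intervalIntegral.integral_const_mul]
    exact (intervalIntegral.abs_integral_le_integral_abs hT).trans
      (intervalIntegral.integral_mono_on hT ((hexp Xt hXt).sub (hexp X hX)).abs
        (hdiff.const_mul _) fun s _ => abs_exp_sub_exp_le (hgC _) (hgC _))
  have hA0 : 0 ≤ A := Finset.sum_nonneg fun _ _ => abs_nonneg _
  have hI0 : 0 ≤ I := intervalIntegral.integral_nonneg hT fun _ _ => abs_nonneg _
  calc |sampleLogLik K T n t Xt g - sampleLogLik K T n t X g|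
      = |((∑ j, g (Xt (t j))) - ∑ j, g (X (t j))) -
          ((∫ s in (0 : ℝ)..T, exp (g (Xt s))) - ∫ s in (0 : ℝ)..T, exp (g (X s)))| := by
        simp only [sampleLogLik]
        congr 1
        ring
    _ ≤ A + exp C * I := (abs_sub _ _).trans (add_le_add hA hI)
    _ ≤ (1 + exp C) * (A + I) := by nlinarith [exp_pos C]

section WeightedL1

variable {ι : Type*} {w b : ι → ℝ} {c : ℝ}

lemma summable_abs_of_summable_mul_abs (hc : 0 < c) (hw : ∀ i, c ≤ w i)
    (hb : Summable fun i => w i * |b i|) : Summable fun i => |b i| :=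
  (hb.div_const c).of_nonneg_of_le (fun _ => abs_nonneg _) fun i => by
    rw [le_div_iff₀ hc, mul_comm]
    exact mul_le_mul_of_nonneg_right (hw i) (abs_nonneg _)

lemma mul_tsum_abs_le_tsum_mul_abs (hc : 0 < c) (hw : ∀ i, c ≤ w i)
    (hb : Summable fun i => w i * |b i|) : c * ∑' i, |b i| ≤ ∑' i, w i * |b i| := by
  rw [← tsum_mul_left]
  exact ((summable_abs_of_summable_mul_abs hc hw hb).mul_left c).tsum_le_tsum
    (fun i => mul_le_mul_of_nonneg_right (hw i) (abs_nonneg _)) hb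

end WeightedL1

section BoundedSeries

variable {ι E : Type*} {b : ι → ℝ} {θ : ι → E → ℝ} {θbar : ℝ}

lemma tsum_mul_eq_tsum_support (b f : ι → ℝ) :
    ∑' i, b i * f i = ∑' i : Function.support b, b i * f i :=
  (tsum_subtype_eq_of_support_subset (Function.support_mul_subset_left b f)).symm

lemma measurable_tsum_mul [MeasurableSpace E] (hb : Summable b) (hθm : ∀ i, Measurable (θ i)) :
    Measurable fun x => ∑' i, b i * θ i x := by
  have := hb.countable_support.to_subtype
  simp_rw [tsum_mul_eq_tsum_support b]
  exact Measurable.tsum fun i => (hθm i).const_mul _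

lemma summable_abs_mul_of_le (hb : Summable fun i => |b i|) {c : ι → ℝ} (hc0 : ∀ i, 0 ≤ c i)
    {M : ℝ} (hcM : ∀ i, c i ≤ M) : Summable fun i => |b i| * c i :=
  (hb.mul_right M).of_nonneg_of_le (fun i => mul_nonneg (abs_nonneg _) (hc0 i)) fun i =>
    mul_le_mul_of_nonneg_left (hcM i) (abs_nonneg _)

lemma abs_sub_le_add_of_abs_le (hθ : ∀ i x, |θ i x| ≤ θbar) (i : ι) (y z : E) :
    |θ i y - θ i z| ≤ θbar + θbar :=
  (abs_sub _ _).trans (add_le_add (hθ i y) (hθ i z))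

variable (hb : Summable fun i => |b i|) (hθ : ∀ i x, |θ i x| ≤ θbar)
include hb hθ

lemma summable_mul_of_abs_le (x : E) : Summable fun i => b i * θ i x :=
  (hb.mul_right θbar).of_norm_bounded fun i => by
    rw [Real.norm_eq_abs, abs_mul]
    exact mul_le_mul_of_nonneg_left (hθ i x) (abs_nonneg _)

lemma abs_tsum_mul_le (x : E) : |∑' i, b i * θ i x| ≤ (∑' i, |b i|) * θbar := by
  rw [← tsum_mul_right]
  exact tsum_of_norm_bounded (hb.mul_right θbar).hasSum fun i => by
    rw [Real.norm_eq_abs, abs_mul]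
    exact mul_le_mul_of_nonneg_left (hθ i x) (abs_nonneg _)

lemma summable_abs_mul_abs_sub (y z : E) : Summable fun i => |b i| * |θ i y - θ i z| :=
  summable_abs_mul_of_le hb (fun _ => abs_nonneg _) (abs_sub_le_add_of_abs_le hθ · y z)

lemma abs_tsum_mul_sub_tsum_mul_le (y z : E) :
    |∑' i, b i * θ i y - ∑' i, b i * θ i z| ≤ ∑' i, |b i| * |θ i y - θ i z| := by
  rw [← (summable_mul_of_abs_le hb hθ y).tsum_sub (summable_mul_of_abs_le hb hθ z)]
  exact tsum_of_norm_bounded (f := fun i => b i * θ i y - b i * θ i z)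
    (summable_abs_mul_abs_sub hb hθ y z).hasSum fun i => by
      rw [← mul_sub, Real.norm_eq_abs, abs_mul]

lemma sum_abs_tsum_mul_sub_le {n : ℕ} (y z : Fin n → E) :
    ∑ j, |∑' i, b i * θ i (y j) - ∑' i, b i * θ i (z j)| ≤
      ∑' i, |b i| * ∑ j, |θ i (y j) - θ i (z j)| := by
  simp_rw [Finset.mul_sum]
  rw [Summable.tsum_finsetSum fun j _ => summable_abs_mul_abs_sub hb hθ _ _]
  exact Finset.sum_le_sum fun j _ => abs_tsum_mul_sub_tsum_mul_le hb hθ _ _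

lemma integral_abs_tsum_mul_sub_le [Countable ι] [MeasurableSpace E] (hθm : ∀ i, Measurable (θ i))
    {T : ℝ} (hT : 0 ≤ T) {X Xt : ℝ → E} (hX : Measurable X) (hXt : Measurable Xt) :
    ∫ s in (0 : ℝ)..T, |∑' i, b i * θ i (Xt s) - ∑' i, b i * θ i (X s)| ≤
      ∑' i, |b i| * ∫ s in (0 : ℝ)..T, |θ i (Xt s) - θ i (X s)| := by
  set d : ι → ℝ → ℝ := fun i s => |θ i (Xt s) - θ i (X s)|
  have hd : ∀ i, Measurable (d i) := fun i => (((hθm i).comp hXt).sub ((hθm i).comp hX)).abs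
  have hdθ : ∀ i s, |d i s| ≤ θbar + θbar := fun i s =>
    (abs_abs _).trans_le (abs_sub_le_add_of_abs_le hθ i _ _)
  have hsum : HasSum (fun i => ∫ s in (0 : ℝ)..T, |b i| * d i s)
      (∫ s in (0 : ℝ)..T, ∑' i, |b i| * d i s) :=
    intervalIntegral.hasSum_integral_of_dominated_convergence (fun i _ => |b i| * (θbar + θbar))
      (fun i => ((hd i).const_mul _).aestronglyMeasurable)
      (fun i => Filter.Eventually.of_forall fun s _ => by
        rw [Real.norm_eq_abs, abs_mul, abs_abs]
        exact mul_le_mul_of_nonneg_left (hdθ i s) (abs_nonneg _))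
      (Filter.Eventually.of_forall fun _ _ => hb.mul_right _) intervalIntegrable_const
      (Filter.Eventually.of_forall fun s _ => (summable_abs_mul_abs_sub hb hθ _ _).hasSum)
  have hg := measurable_tsum_mul hb.of_abs hθm
  have hlhs : IntervalIntegrable
      (fun s => |∑' i, b i * θ i (Xt s) - ∑' i, b i * θ i (X s)|) volume 0 T :=
    intervalIntegrable_of_abs_le ((hg.comp hXt).sub (hg.comp hX)).abs
      (fun s => (abs_abs _).trans_le ((abs_sub _ _).trans
        (add_le_add (abs_tsum_mul_le hb hθ _) (abs_tsum_mul_le hb hθ _)))) _ _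
  have hrhs : IntervalIntegrable (fun s => ∑' i, |b i| * d i s) volume 0 T :=
    intervalIntegrable_of_abs_le (measurable_tsum_mul hb hd) (fun s => by
      simpa only [abs_abs] using
        abs_tsum_mul_le (b := fun i => |b i|) (by simpa only [abs_abs] using hb) hdθ s) 0 T
  simp_rw [← intervalIntegral.integral_const_mul]
  rw [hsum.tsum_eq]
  exact intervalIntegral.integral_mono_on hT hlhs hrhs fun s _ =>
    abs_tsum_mul_sub_tsum_mul_le hb hθ _ _

variable [MeasurableSpace E] (hθm : ∀ i, Measurable (θ i)) {T : ℝ} (hT : 0 ≤ T) {n : ℕ}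
  (t : Fin n → ℝ) {X Xt : ℝ → E} (hX : Measurable X) (hXt : Measurable Xt) {S : ℝ}
  (hS : ∀ i, pathDiscrepancy T t X Xt (θ i) ≤ S)
include hθm hT hX hXt hS

lemma pathDiscrepancy_tsum_mul_le_of_countable [Countable ι] :
    pathDiscrepancy T t X Xt (fun x => ∑' i, b i * θ i x) ≤ (∑' i, |b i|) * S := by
  set J : ι → ℝ := fun i => ∑ j, |θ i (Xt (t j)) - θ i (X (t j))|
  set I : ι → ℝ := fun i => ∫ s in (0 : ℝ)..T, |θ i (Xt s) - θ i (X s)|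
  have hJ0 : ∀ i, 0 ≤ J i := fun i => Finset.sum_nonneg fun _ _ => abs_nonneg _
  have hI0 : ∀ i, 0 ≤ I i := fun i => intervalIntegral.integral_nonneg hT fun _ _ => abs_nonneg _
  have hJS : ∀ i, J i ≤ S := fun i => (le_add_of_nonneg_right (hI0 i)).trans (hS i)
  have hIS : ∀ i, I i ≤ S := fun i => (le_add_of_nonneg_left (hJ0 i)).trans (hS i)
  calc pathDiscrepancy T t X Xt (fun x => ∑' i, b i * θ i x)
      ≤ ∑' i, |b i| * J i + ∑' i, |b i| * I i :=
        add_le_add (sum_abs_tsum_mul_sub_le hb hθ _ _)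
          (integral_abs_tsum_mul_sub_le hb hθ hθm hT hX hXt)
    _ = ∑' i, |b i| * pathDiscrepancy T t X Xt (θ i) := by
        rw [← (summable_abs_mul_of_le hb hJ0 hJS).tsum_add (summable_abs_mul_of_le hb hI0 hIS)]
        simp only [pathDiscrepancy, mul_add, J, I]
    _ ≤ ∑' i, |b i| * S :=
        (summable_abs_mul_of_le hb (fun i => pathDiscrepancy_nonneg hT t X Xt (θ i))
          hS).tsum_le_tsum (fun i => mul_le_mul_of_nonneg_left (hS i) (abs_nonneg _))
          (hb.mul_right S)
    _ = (∑' i, |b i|) * S := tsum_mul_right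

lemma pathDiscrepancy_tsum_mul_le :
    pathDiscrepancy T t X Xt (fun x => ∑' i, b i * θ i x) ≤ (∑' i, |b i|) * S := by
  have := hb.of_abs.countable_support.to_subtype
  have hsupp : ∑' i : Function.support b, |b i| = ∑' i, |b i| :=
    tsum_subtype_eq_of_support_subset (f := fun i => |b i|) fun i hi => by simpa using hi
  simp_rw [tsum_mul_eq_tsum_support b, ← hsupp]
  exact pathDiscrepancy_tsum_mul_le_of_countable (θ := fun i : Function.support b => θ i)
    (hb.subtype _) (fun i => hθ i) (fun i => hθm i) hT t hX hXt fun i => hS i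

end BoundedSeries

theorem stmt_12_general (K : ℕ) (T : ℝ) (hT : 0 < T) (n : ℕ) (tj : Fin n → ℝ)
    (X Xt : ℝ → (Fin K → ℝ)) (hX : Measurable X) (hXt : Measurable Xt)
    {ι : Type*} (θ : ι → (Fin K → ℝ) → ℝ) (hθmeas : ∀ i, Measurable (θ i))
    (θbar : ℝ) (hθbd : ∀ i x, |θ i x| ≤ θbar)
    (w : ι → ℝ) (wlow : ℝ) (hwlow : IsGLB (Set.range w) wlow) (hwpos : 0 < wlow)
    (Bbar : ℝ)
    (S : ℝ)
    (hS : ∀ i, (∑ j, |θ i (Xt (tj j)) - θ i (X (tj j))|) +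
        (∫ s in (0 : ℝ)..T, |θ i (Xt s) - θ i (X s)|) ≤ S) :
    ∀ b : ι → ℝ, Summable (fun i => w i * |b i|) → (∑' i, w i * |b i|) ≤ Bbar →
      |sampleLogLik K T n tj Xt (fun x => ∑' i, b i * θ i x) -
          sampleLogLik K T n tj X (fun x => ∑' i, b i * θ i x)| ≤
        Bbar / wlow * (1 + Real.exp (Bbar / wlow * θbar)) * S := by
  intro b hwb hwbB
  obtain ⟨i₀⟩ : Nonempty ι := by
    by_contra h
    have : IsEmpty ι := not_nonempty_iff.1 h
    exact not_isTop wlow (isGLB_empty_iff.1 (Set.range_eq_empty w ▸ hwlow))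
  have hw : ∀ i, wlow ≤ w i := fun i => hwlow.1 ⟨i, rfl⟩
  have hb := summable_abs_of_summable_mul_abs hwpos hw hwb
  have hbB : ∑' i, |b i| ≤ Bbar / wlow := by
    rw [le_div_iff₀ hwpos, mul_comm]
    exact (mul_tsum_abs_le_tsum_mul_abs hwpos hw hwb).trans hwbB
  have hθbar : 0 ≤ θbar := (abs_nonneg _).trans (hθbd i₀ 0)
  have hS0 : 0 ≤ S := (pathDiscrepancy_nonneg hT.le tj X Xt (θ i₀)).trans (hS i₀)
  calc _ ≤ (1 + exp (Bbar / wlow * θbar)) *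
        pathDiscrepancy T tj X Xt (fun x => ∑' i, b i * θ i x) :=
        abs_sampleLogLik_sub_le hT.le tj hX hXt (measurable_tsum_mul hb.of_abs hθmeas) fun x =>
          (abs_tsum_mul_le hb hθbd x).trans (mul_le_mul_of_nonneg_right hbB hθbar)
    _ ≤ (1 + exp (Bbar / wlow * θbar)) * ((∑' i, |b i|) * S) := by
        gcongr
        exact pathDiscrepancy_tsum_mul_le hb hθbd hθmeas hT.le tj hX hXt hS
    _ = (∑' i, |b i|) * (1 + exp (Bbar / wlow * θbar)) * S := by ring
    _ ≤ Bbar / wlow * (1 + exp (Bbar / wlow * θbar)) * S := by gcongr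

/-- Deterministic stability estimate from the proof of Corollary A.1: for any
`g = ∑ᵢ bᵢ θᵢ ∈ ℒ(B̄)` and any `S` dominating
`supᵢ [∑ⱼ |θᵢ(X̃(tⱼ)) - θᵢ(X(tⱼ))| + ∫₀ᵀ |θᵢ(X̃(t)) - θᵢ(X(t))| dt]`,
`|L_T(g; X̃) - L_T(g; X)| ≤ B̄_w (1 + e^{B̄_w θ̄}) S`, where `B̄_w = B̄ / w̲`. -/
theorem stmt_12 (K : ℕ) (T : ℝ) (hT : 0 < T) (n : ℕ) (tj : Fin n → ℝ)
    (htj : StrictMono tj) (htj0 : ∀ i, 0 < tj i) (htjT : ∀ i, tj i ≤ T)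
    (X Xt : ℝ → (Fin K → ℝ)) (hX : Measurable X) (hXt : Measurable Xt)
    {ι : Type*} (θ : ι → (Fin K → ℝ) → ℝ) (hθmeas : ∀ i, Measurable (θ i))
    (θbar : ℝ) (hθbd : ∀ i x, |θ i x| ≤ θbar)
    (w : ι → ℝ) (wlow : ℝ) (hwlow : IsGLB (Set.range w) wlow) (hwpos : 0 < wlow)
    (Bbar : ℝ) (hBbar : 0 < Bbar)
    (S : ℝ)
    (hS : ∀ i, (∑ j, |θ i (Xt (tj j)) - θ i (X (tj j))|) +
        (∫ s in (0 : ℝ)..T, |θ i (Xt s) - θ i (X s)|) ≤ S) :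
    ∀ b : ι → ℝ, Summable (fun i => w i * |b i|) → (∑' i, w i * |b i|) ≤ Bbar →
      |sampleLogLik K T n tj Xt (fun x => ∑' i, b i * θ i x) -
          sampleLogLik K T n tj X (fun x => ∑' i, b i * θ i x)| ≤
        Bbar / wlow * (1 + Real.exp (Bbar / wlow * θbar)) * S :=
  stmt_12_general K T hT n tj X Xt hX hXt θ hθmeas θbar hθbd w wlow hwlow hwpos Bbar S hS
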